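/- Let c, s, L, E, I, A, A*, G > 0 and a, u, v > 0 with a ≠ 8, a ≠ 16, u ≠ 4, v ≠ 4 be reals, let x₀ ∈ [0,1), and let P ≥ 1 be an integer. Then H(P,x₀) = 2·c·s·L·( (10·L²/(3·E·I))·(1 − (a/16)^P)/(16 − a) − (20·L²/(3·E·I·a))·C_{P,a/16}(x₀) − 2·L²·((1/2)^P − (a/16)^P)/(E·I·(8 − a)) + (L²/(2^{P−2}·E·I·a))·C_{P,a/8}(x₀) + (2/(E·A·u))·C_{P,u/4}(x₀) − (1/(E·A·u))·(1 − (u/4)^P)/((4/u) − 1) + (1/(G·A*·v))·(1 − (v/4)^P)/((4/v) − 1) − (2/(G·A*·v))·C_{P,v/4}(x₀) ). -/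

import Mathlib

/-- The `k`-th binary digit of `x ∈ [0,1)`: ρ_k(x) = ⌊2^k x⌋ − 2⌊2^{k−1} x⌋. -/
noncomputable def binDigit (k : ℕ) (x : ℝ) : ℤ := ⌊(2:ℝ) ^ k * x⌋ - 2 * ⌊(2:ℝ) ^ (k - 1) * x⌋

/-- The partial sum C_{P,t}(x) = Σ_{k=1}^P ρ_k(x) t^k. -/
noncomputable def Cpart (P : ℕ) (t x : ℝ) : ℝ :=
  ∑ k ∈ Finset.Icc 1 P, (binDigit k x : ℝ) * t ^ k

/-- Horizontal displacement per unit load of the end node located at `x₀` in a binary tree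
structure with `P` levels, from the Principle of Virtual Work (bending + axial + shear). -/
noncomputable def Hdisp (c s L E I A A' G a u v x₀ : ℝ) (P : ℕ) : ℝ :=
  (∑ i ∈ Finset.Icc 1 P, (a ^ (i - 1) / (E * I)) *
      ∫ x in (0:ℝ)..(L * 2 ^ ((1:ℤ) - (i:ℤ))),
        (s * L * (2 ^ ((2:ℤ) - (i:ℤ)) - 2 ^ ((1:ℤ) - (P:ℤ))) - s * x) *
          (1 - 2 * (binDigit i x₀ : ℝ)) *
          (c * 2 ^ (-(i:ℤ)) * (L * 2 ^ ((1:ℤ) - (i:ℤ)) - x))) +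
  (∑ i ∈ Finset.Icc 1 P,
      c * s * (2 * (binDigit i x₀ : ℝ) - 1) * 2 ^ (-(i:ℤ)) * L * 2 ^ ((1:ℤ) - (i:ℤ)) *
        u ^ (i - 1) / (E * A)) +
  (∑ i ∈ Finset.Icc 1 P,
      c * s * (1 - 2 * (binDigit i x₀ : ℝ)) * 2 ^ (-(i:ℤ)) * L * 2 ^ ((1:ℤ) - (i:ℤ)) *
        v ^ (i - 1) / (G * A'))

/-!
At level `i` the bending integral is a cubic in the member length `L·2^{1-i}`, and together
with the factors `2^{-i}` and `a^{i-1}`, `u^{i-1}`, `v^{i-1}` every level contributes a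
multiple of `(1 - 2ρ_i(x₀))·r^i` with `r ∈ {a/16, a/8, u/4, v/4}`. Summed over the levels,
each such family is a finite geometric series minus twice the digit series `C_{P,r}(x₀)`.
-/

open Finset

theorem integral_sub_mul_mul_mul_sub (h s k m ℓ : ℝ) :
    ∫ x in (0:ℝ)..ℓ, (h - s * x) * k * (m * (ℓ - x)) =
      k * m * (h * ℓ ^ 2 / 2 - s * ℓ ^ 3 / 6) := by
  have hpoly : ∀ x : ℝ, (h - s * x) * k * (m * (ℓ - x)) =
      k * m * (h * ℓ - (h + s * ℓ) * x + s * x ^ 2) := fun x => by ring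
  simp only [hpoly]
  rw [intervalIntegral.integral_const_mul, intervalIntegral.integral_add,
    intervalIntegral.integral_sub, intervalIntegral.integral_const,
    intervalIntegral.integral_const_mul, intervalIntegral.integral_const_mul, integral_id,
    integral_pow, smul_eq_mul]
  · ring
  all_goals exact (by fun_prop : Continuous _).intervalIntegrable _ _

theorem sum_Icc_one_pow {K : Type*} [Field K] {r : K} (hr : r ≠ 1) (n : ℕ) :
    ∑ i ∈ Icc 1 n, r ^ i = (r - r ^ (n + 1)) / (1 - r) := by
  rw [← Ico_add_one_right_eq_Icc, geom_sum_Ico' hr (by omega), pow_one]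

theorem sum_one_sub_two_binDigit_mul_pow (x : ℝ) {r : ℝ} (hr : r ≠ 1) (P : ℕ) :
    ∑ i ∈ Icc 1 P, (1 - 2 * (binDigit i x : ℝ)) * r ^ i =
      (r - r ^ (P + 1)) / (1 - r) - 2 * Cpart P r x := by
  simp only [sub_mul, one_mul, mul_assoc, sum_sub_distrib, ← mul_sum, sum_Icc_one_pow hr, Cpart]

theorem div_pow_pow_eq_mul_inv_pow {K : Type*} [Field K] (a b : K) (k i : ℕ) :
    (a / b ^ k) ^ i = a ^ i * ((b ^ i)⁻¹) ^ k := by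
  rw [div_pow, ← pow_mul, mul_comm, pow_mul, inv_pow, div_eq_mul_inv]

theorem bending_level_eq (c s L E I a ρ : ℝ) (ha : a ≠ 0) {i : ℕ} (hi : 1 ≤ i) (P : ℕ) :
    (a ^ (i - 1) / (E * I)) *
      ∫ x in (0:ℝ)..(L * 2 ^ ((1:ℤ) - (i:ℤ))),
        (s * L * (2 ^ ((2:ℤ) - (i:ℤ)) - 2 ^ ((1:ℤ) - (P:ℤ))) - s * x) * (1 - 2 * ρ) *
          (c * 2 ^ (-(i:ℤ)) * (L * 2 ^ ((1:ℤ) - (i:ℤ)) - x)) =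
      c * s * L ^ 3 / (E * I * a) *
        (20 / 3 * ((1 - 2 * ρ) * (a / 16) ^ i) - 4 / 2 ^ P * ((1 - 2 * ρ) * (a / 8) ^ i)) := by
  rw [integral_sub_mul_mul_mul_sub, pow_sub₀ a ha hi, zpow_neg, zpow_natCast,
    show (1:ℤ) = ((1:ℕ):ℤ) from rfl, show (2:ℤ) = ((2:ℕ):ℤ) from rfl,
    show (16:ℝ) = 2 ^ 4 by norm_num, show (8:ℝ) = 2 ^ 3 by norm_num]
  simp only [zpow_natCast_sub_natCast₀ (a := (2:ℝ)) (by norm_num), div_pow_pow_eq_mul_inv_pow]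
  ring

theorem axial_shear_level_eq (c s L K u w : ℝ) (hu : u ≠ 0) {i : ℕ} (hi : 1 ≤ i) :
    c * s * w * 2 ^ (-(i:ℤ)) * L * 2 ^ ((1:ℤ) - (i:ℤ)) * u ^ (i - 1) / K =
      2 * c * s * L / (K * u) * (w * (u / 4) ^ i) := by
  rw [pow_sub₀ u hu hi, zpow_neg, zpow_natCast, show (1:ℤ) = ((1:ℕ):ℤ) from rfl,
    zpow_natCast_sub_natCast₀ (a := (2:ℝ)) (by norm_num), show (4:ℝ) = 2 ^ 2 by norm_num,
    div_pow_pow_eq_mul_inv_pow]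
  ring

theorem bending_sum_eq (c s L E I a x₀ : ℝ) (ha : a ≠ 0) (ha8 : a ≠ 8) (ha16 : a ≠ 16)
    (P : ℕ) :
    (∑ i ∈ Icc 1 P, (a ^ (i - 1) / (E * I)) *
      ∫ x in (0:ℝ)..(L * 2 ^ ((1:ℤ) - (i:ℤ))),
        (s * L * (2 ^ ((2:ℤ) - (i:ℤ)) - 2 ^ ((1:ℤ) - (P:ℤ))) - s * x) *
          (1 - 2 * (binDigit i x₀ : ℝ)) *
          (c * 2 ^ (-(i:ℤ)) * (L * 2 ^ ((1:ℤ) - (i:ℤ)) - x))) =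
      2 * c * s * L *
        ((10 * L ^ 2 / (3 * E * I)) * ((1 - (a / 16) ^ P) / (16 - a)) -
          (20 * L ^ 2 / (3 * E * I * a)) * Cpart P (a / 16) x₀ -
          2 * L ^ 2 * (((1 / 2) ^ P - (a / 16) ^ P) / (E * I * (8 - a))) +
          (L ^ 2 / (2 ^ ((P:ℤ) - 2) * E * I * a)) * Cpart P (a / 8) x₀) := by
  rw [sum_congr rfl fun i hi => bending_level_eq c s L E I a _ ha (mem_Icc.1 hi).1 P,
    ← mul_sum, sum_sub_distrib, ← mul_sum, ← mul_sum,
    sum_one_sub_two_binDigit_mul_pow x₀ ((div_eq_one_iff_eq (by norm_num)).not.2 ha16),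
    sum_one_sub_two_binDigit_mul_pow x₀ ((div_eq_one_iff_eq (by norm_num)).not.2 ha8),
    zpow_sub₀ two_ne_zero, zpow_natCast]
  have h16 : (16:ℝ) - a ≠ 0 := sub_ne_zero.2 (Ne.symm ha16)
  have h8 : (8:ℝ) - a ≠ 0 := sub_ne_zero.2 (Ne.symm ha8)
  have h16P : (16:ℝ) ^ P = (2 ^ P) ^ 4 := by rw [← pow_mul, mul_comm, pow_mul]; norm_num
  have h8P : (8:ℝ) ^ P = (2 ^ P) ^ 3 := by rw [← pow_mul, mul_comm, pow_mul]; norm_num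
  simp only [div_pow, one_pow, pow_succ, h16P, h8P]
  field_simp
  ring

theorem axial_sum_eq (c s L E A u x₀ : ℝ) (hu : u ≠ 0) (hu4 : u ≠ 4) (P : ℕ) :
    (∑ i ∈ Icc 1 P,
      c * s * (2 * (binDigit i x₀ : ℝ) - 1) * 2 ^ (-(i:ℤ)) * L * 2 ^ ((1:ℤ) - (i:ℤ)) *
        u ^ (i - 1) / (E * A)) =
      2 * c * s * L *
        ((2 / (E * A * u)) * Cpart P (u / 4) x₀ -
          (1 / (E * A * u)) * ((1 - (u / 4) ^ P) / (4 / u - 1))) := by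
  rw [div_sub_one hu,
    sum_congr rfl fun i hi => axial_shear_level_eq c s L _ u _ hu (mem_Icc.1 hi).1]
  simp only [← neg_sub (1:ℝ), neg_mul, sum_neg_distrib, ← mul_sum]
  rw [sum_one_sub_two_binDigit_mul_pow x₀ ((div_eq_one_iff_eq (by norm_num)).not.2 hu4)]
  have h4 : (4:ℝ) - u ≠ 0 := sub_ne_zero.2 (Ne.symm hu4)
  field_simp
  ring

theorem shear_sum_eq (c s L G A' v x₀ : ℝ) (hv : v ≠ 0) (hv4 : v ≠ 4) (P : ℕ) :
    (∑ i ∈ Icc 1 P,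
      c * s * (1 - 2 * (binDigit i x₀ : ℝ)) * 2 ^ (-(i:ℤ)) * L * 2 ^ ((1:ℤ) - (i:ℤ)) *
        v ^ (i - 1) / (G * A')) =
      2 * c * s * L *
        ((1 / (G * A' * v)) * ((1 - (v / 4) ^ P) / (4 / v - 1)) -
          (2 / (G * A' * v)) * Cpart P (v / 4) x₀) := by
  rw [div_sub_one hv,
    sum_congr rfl fun i hi => axial_shear_level_eq c s L _ v _ hv (mem_Icc.1 hi).1,
    ← mul_sum,
    sum_one_sub_two_binDigit_mul_pow x₀ ((div_eq_one_iff_eq (by norm_num)).not.2 hv4)]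
  have h4 : (4:ℝ) - v ≠ 0 := sub_ne_zero.2 (Ne.symm hv4)
  field_simp
  ring

theorem horizontal_displacement_finite_general (c s L E I A A' G a u v : ℝ)
    (ha : 0 < a) (hu : 0 < u) (hv : 0 < v)
    (ha8 : a ≠ 8) (ha16 : a ≠ 16) (hu4 : u ≠ 4) (hv4 : v ≠ 4)
    (x₀ : ℝ) (P : ℕ) :
    Hdisp c s L E I A A' G a u v x₀ P =
      2 * c * s * L *
        ((10 * L ^ 2 / (3 * E * I)) * ((1 - (a / 16) ^ P) / (16 - a)) -
          (20 * L ^ 2 / (3 * E * I * a)) * Cpart P (a / 16) x₀ -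
          2 * L ^ 2 * (((1 / 2) ^ P - (a / 16) ^ P) / (E * I * (8 - a))) +
          (L ^ 2 / (2 ^ ((P:ℤ) - 2) * E * I * a)) * Cpart P (a / 8) x₀ +
          (2 / (E * A * u)) * Cpart P (u / 4) x₀ -
          (1 / (E * A * u)) * ((1 - (u / 4) ^ P) / (4 / u - 1)) +
          (1 / (G * A' * v)) * ((1 - (v / 4) ^ P) / (4 / v - 1)) -
          (2 / (G * A' * v)) * Cpart P (v / 4) x₀) := by
  rw [Hdisp, bending_sum_eq c s L E I a x₀ ha.ne' ha8 ha16 P,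
    axial_sum_eq c s L E A u x₀ hu.ne' hu4 P, shear_sum_eq c s L G A' v x₀ hv.ne' hv4 P]
  ring

/-- Closed form of the horizontal displacement of the end node at `x₀` for a finite
structure with `P` levels, when `a ≠ 8`, `a ≠ 16`, `u ≠ 4`, `v ≠ 4`. -/
theorem horizontal_displacement_finite (c s L E I A A' G a u v : ℝ)
    (hc : 0 < c) (hs : 0 < s) (hL : 0 < L) (hE : 0 < E) (hI : 0 < I)
    (hA : 0 < A) (hA' : 0 < A') (hG : 0 < G)
    (ha : 0 < a) (hu : 0 < u) (hv : 0 < v)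
    (ha8 : a ≠ 8) (ha16 : a ≠ 16) (hu4 : u ≠ 4) (hv4 : v ≠ 4)
    (x₀ : ℝ) (hx₀ : x₀ ∈ Set.Ico (0:ℝ) 1) (P : ℕ) (hP : 1 ≤ P) :
    Hdisp c s L E I A A' G a u v x₀ P =
      2 * c * s * L *
        ((10 * L ^ 2 / (3 * E * I)) * ((1 - (a / 16) ^ P) / (16 - a)) -
          (20 * L ^ 2 / (3 * E * I * a)) * Cpart P (a / 16) x₀ -
          2 * L ^ 2 * (((1 / 2) ^ P - (a / 16) ^ P) / (E * I * (8 - a))) +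
          (L ^ 2 / (2 ^ ((P:ℤ) - 2) * E * I * a)) * Cpart P (a / 8) x₀ +
          (2 / (E * A * u)) * Cpart P (u / 4) x₀ -
          (1 / (E * A * u)) * ((1 - (u / 4) ^ P) / (4 / u - 1)) +
          (1 / (G * A' * v)) * ((1 - (v / 4) ^ P) / (4 / v - 1)) -
          (2 / (G * A' * v)) * Cpart P (v / 4) x₀) :=
  horizontal_displacement_finite_general c s L E I A A' G a u v ha hu hv ha8 ha16 hu4 hv4 x₀ P
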